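/- For every real x > 0, every h ∈ ℂ with Re(h) > 1, and every t ∈ ℂ, all the series below converge absolutely and Σ_{n=0}^{∞} β_{n,χ,q}^h(x) · t^n/n! = (h−1)(1−q) · Σ_{m=0}^{∞} q^{(h−1)m}·χ(m)·exp([x+m]_q·t) − t · Σ_{m=0}^{∞} q^{hm+x}·χ(m)·exp([x+m]_q·t). -/

import Mathlib

open Complex Finset Filter

/-- Complex power `q^z := exp(z·log q)` for a real base `q`. -/
noncomputable def qcpow (q : ℝ) (z : ℂ) : ℂ := Complex.exp (z * (Real.log q : ℂ))

/-- The complex `q`-number `[z]_q = (1 - q^z)/(1 - q)`. -/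
noncomputable def qnum (q : ℝ) (z : ℂ) : ℂ := (1 - qcpow q z) / (1 - (q : ℂ))

/-- The real `q`-number `[y]_q = (1 - q^y)/(1 - q)` for real `y`. -/
noncomputable def qnumR (q : ℝ) (y : ℝ) : ℝ := (1 - Real.exp (y * Real.log q)) / (1 - q)

/-- The `(h,q)`-Bernoulli polynomial
`β_{n,q}^h(x) = (1-q)^{-n} ∑_{l=0}^{n} C(n,l) (-1)^l q^{lx} (l+h-1)/[l+h-1]_q`. -/
noncomputable def qbeta (q : ℝ) (h : ℂ) (n : ℕ) (x : ℝ) : ℂ :=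
  (1 - (q : ℂ))⁻¹ ^ n * ∑ l ∈ Finset.range (n + 1),
    (n.choose l : ℂ) * (-1) ^ l * qcpow q ((l : ℂ) * (x : ℂ)) *
      (((l : ℂ) + h - 1) / qnum q ((l : ℂ) + h - 1))

/-- The generalized `(h,q)`-Bernoulli polynomial attached to a Dirichlet character `χ` mod `f`:
`β_{n,χ,q}^h(x) = [f]_q^{n-1} ∑_{a=0}^{f-1} χ(a) q^{(h-1)a} β_{n,q^f}^h((x+a)/f)`. -/
noncomputable def qbetaChi (q : ℝ) (h : ℂ) (f : ℕ) (χ : DirichletCharacter ℂ f)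
    (n : ℕ) (x : ℝ) : ℂ :=
  qnum q (f : ℂ) ^ ((n : ℤ) - 1) * ∑ a ∈ Finset.range f,
    χ (a : ZMod f) * qcpow q ((h - 1) * (a : ℂ)) * qbeta (q ^ f) h n ((x + a) / f)

/-!
Expanding `(l+h-1)/[l+h-1]_q = (1-q)(l+h-1) ∑_m q^{(l+h-1)m}` and summing the binomial sum
over `l` gives the closed form
`β_{n,q}^h(x) = (h-1)(1-q) ∑_m q^{(h-1)m} [x+m]_q^n - n ∑_m q^{hm+x} [x+m]_q^{n-1}`.
Splitting `m` into residue classes `a + f k` and using `[x+a+fk]_q = [f]_q [(x+a)/f+k]_{q^f}`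
turns the definition of `β_{n,χ,q}^h` into the same formula twisted by `χ`. Since `[x+m]_q`
is bounded, the generating series is an absolutely convergent double series; summing over `n`
first produces the exponentials, and the factor `n` in the second sum shifts the index, which
produces the factor `t`.
-/

theorem sum_range_choose_mul_neg_one_pow_mul_pow {R : Type*} [CommRing R] (n : ℕ) (y : R) :
    ∑ l ∈ range (n + 1), (n.choose l : R) * (-1) ^ l * y ^ l = (1 - y) ^ n := by
  rw [sub_eq_neg_add, add_pow]
  refine sum_congr rfl fun l _ => ?_
  rw [one_pow, neg_pow]
  ring

theorem sum_range_choose_mul_neg_one_pow_mul_natCast_mul_pow {R : Type*} [CommRing R]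
    (n : ℕ) (y : R) :
    ∑ l ∈ range (n + 1), (n.choose l : R) * (-1) ^ l * (l : R) * y ^ l
      = -(n : R) * y * (1 - y) ^ (n - 1) := by
  cases n with
  | zero => simp
  | succ n =>
    have hterm (k : ℕ) : ((n + 1).choose (k + 1) : R) * (-1) ^ (k + 1) * ((k + 1 : ℕ) : R)
        * y ^ (k + 1) = -((n : R) + 1) * y * ((n.choose k : R) * (-1) ^ k * y ^ k) := by
      have hc := congrArg (Nat.cast : ℕ → R) (Nat.add_one_mul_choose_eq n k)
      push_cast at hc ⊢
      linear_combination (-1 : R) ^ k * y ^ (k + 1) * hc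
    rw [sum_range_succ', sum_congr rfl fun k _ => hterm k, ← mul_sum,
      sum_range_choose_mul_neg_one_pow_mul_pow]
    simp

theorem sum_range_choose_mul_neg_one_pow_mul_add_natCast_mul_pow {R : Type*} [CommRing R]
    (n : ℕ) (a y : R) :
    ∑ l ∈ range (n + 1), (n.choose l : R) * (-1) ^ l * (a + l) * y ^ l
      = a * (1 - y) ^ n - n * y * (1 - y) ^ (n - 1) := by
  have hsplit (l : ℕ) : (n.choose l : R) * (-1) ^ l * (a + l) * y ^ l
      = a * ((n.choose l : R) * (-1) ^ l * y ^ l) + (n.choose l : R) * (-1) ^ l * l * y ^ l := by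
    ring
  rw [sum_congr rfl fun l _ => hsplit l, sum_add_distrib, ← mul_sum,
    sum_range_choose_mul_neg_one_pow_mul_pow, sum_range_choose_mul_neg_one_pow_mul_natCast_mul_pow]
  ring

theorem summable_norm_mul_of_norm_le {ι R : Type*} [NormedRing R] {w u : ι → R} {C : ℝ}
    (hw : Summable fun i => ‖w i‖) (hu : ∀ i, ‖u i‖ ≤ C) : Summable fun i => ‖w i * u i‖ :=
  (hw.mul_right C).of_nonneg_of_le (fun _ => norm_nonneg _) fun i =>
    (norm_mul_le _ _).trans (mul_le_mul_of_nonneg_left (hu i) (norm_nonneg _))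

theorem hasSum_tsum_mul_pow_mul_pow_div_factorial {w c : ℕ → ℂ} {C : ℝ}
    (hw : Summable fun m => ‖w m‖) (hc : ∀ m, ‖c m‖ ≤ C) (t : ℂ) :
    HasSum (fun n : ℕ => (∑' m, w m * c m ^ n) * t ^ n / n.factorial)
      (∑' m, w m * Complex.exp (c m * t)) := by
  have hC : 0 ≤ C := (norm_nonneg _).trans (hc 0)
  set g : ℕ × ℕ → ℂ := fun p => w p.1 * ((c p.1 * t) ^ p.2 / p.2.factorial)
  have hg : Summable g := by
    refine Summable.of_norm_bounded
      ((hw.mul_of_nonneg (Real.summable_pow_div_factorial (C * ‖t‖)) (fun _ => norm_nonneg _)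
        fun n => by positivity)) fun p => ?_
    simp only [g, norm_mul, norm_div, norm_pow, Complex.norm_natCast]
    gcongr
    exact hc _
  have hrow : HasSum (fun m => w m * Complex.exp (c m * t)) (∑' p, g p) :=
    hg.hasSum.prod_fiberwise fun m => by
      rw [Complex.exp_eq_exp_ℂ]
      exact (NormedSpace.expSeries_div_hasSum_exp (c m * t)).mul_left (w m)
  have hcol : HasSum (fun n => ∑' m, g (m, n)) (∑' p, g p) :=
    ((Equiv.prodComm ℕ ℕ).hasSum_iff.2 hg.hasSum).prod_fiberwise fun n =>
      (hg.prod_symm.prod_factor n).hasSum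
  rw [hrow.tsum_eq]
  convert hcol using 2 with n
  rw [← tsum_mul_right, ← tsum_div_const]
  refine tsum_congr fun m => ?_
  simp only [g, mul_pow]
  ring

theorem HasSum.natCast_mul_sub_one_mul_pow_div_factorial {a : ℕ → ℂ} {t S : ℂ}
    (hs : HasSum (fun n : ℕ => a n * t ^ n / n.factorial) S) :
    HasSum (fun n : ℕ => n * a (n - 1) * t ^ n / n.factorial) (t * S) := by
  rw [← hasSum_nat_add_iff' 1]
  simp only [sum_range_one, Nat.cast_zero, zero_mul, zero_div, sub_zero, Nat.add_sub_cancel]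
  refine (hs.mul_left t).congr_fun fun n => ?_
  rw [Nat.factorial_succ]
  push_cast
  field_simp
  ring

section qcpow

variable {q : ℝ}

theorem qcpow_add (z w : ℂ) : qcpow q (z + w) = qcpow q z * qcpow q w := by
  simp [qcpow, add_mul, Complex.exp_add]

theorem qcpow_natCast_mul (n : ℕ) (z : ℂ) : qcpow q (n * z) = qcpow q z ^ n := by
  simp [qcpow, mul_assoc, Complex.exp_nat_mul]

theorem qcpow_pow (f : ℕ) (z : ℂ) : qcpow (q ^ f) z = qcpow q (f * z) := by
  simp only [qcpow, Real.log_pow]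
  push_cast
  ring_nf

theorem qcpow_ofReal (y : ℝ) : qcpow q y = Real.exp (y * Real.log q) := by
  rw [qcpow, ← Complex.ofReal_mul, Complex.ofReal_exp]

theorem qnum_ofReal (y : ℝ) : qnum q y = qnumR q y := by
  rw [qnum, qcpow_ofReal, qnumR]
  push_cast
  ring

theorem one_sub_qcpow_ofReal (hq1 : q ≠ 1) (y : ℝ) : 1 - qcpow q y = (1 - q) * qnumR q y := by
  have : (1 : ℂ) - q ≠ 0 := sub_ne_zero.2 (by exact_mod_cast hq1.symm)
  rw [← qnum_ofReal, qnum]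
  field_simp

theorem one_sub_pow_eq_mul_qnumR (hq0 : 0 < q) (hq1 : q ≠ 1) (f : ℕ) :
    1 - q ^ f = (1 - q) * qnumR q f := by
  rw [qnumR, Real.exp_nat_mul, Real.exp_log hq0, mul_div_cancel₀ _ (sub_ne_zero.2 hq1.symm)]

theorem qnumR_natCast_mul (hq0 : 0 < q) (hq1 : q < 1) (f : ℕ) (y : ℝ) :
    qnumR q (f * y) = qnumR q f * qnumR (q ^ f) y := by
  obtain rfl | hf := eq_or_ne f 0
  · simp [qnumR]
  have hqf : q ^ f < 1 := pow_lt_one₀ hq0.le hq1 hf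
  have hexp : Real.exp (f * Real.log q) = q ^ f := by
    rw [← Real.log_pow, Real.exp_log (pow_pos hq0 f)]
  simp only [qnumR, Real.log_pow, hexp]
  field_simp [(sub_pos.2 hq1).ne', (sub_pos.2 hqf).ne']

theorem norm_qcpow (z : ℂ) : ‖qcpow q z‖ = Real.exp (z.re * Real.log q) := by
  simp [qcpow, Complex.norm_exp, Complex.mul_re]

theorem norm_qcpow_lt_one (hq0 : 0 < q) (hq1 : q < 1) {w : ℂ} (hw : 0 < w.re) :
    ‖qcpow q w‖ < 1 := by
  rw [norm_qcpow, Real.exp_lt_one_iff]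
  exact mul_neg_of_pos_of_neg hw (Real.log_neg hq0 hq1)

theorem hasSum_qcpow_mul_natCast (hq0 : 0 < q) (hq1 : q < 1) {w : ℂ} (hw : 0 < w.re) :
    HasSum (fun m : ℕ => qcpow q (w * m)) (1 - qcpow q w)⁻¹ := by
  simpa only [mul_comm w, qcpow_natCast_mul] using
    hasSum_geometric_of_norm_lt_one (norm_qcpow_lt_one hq0 hq1 hw)

theorem hasSum_mul_qcpow_mul_natCast_div_qnum (hq0 : 0 < q) (hq1 : q < 1) {w : ℂ}
    (hw : 0 < w.re) :
    HasSum (fun m : ℕ => (1 - q) * w * qcpow q (w * m)) (w / qnum q w) := by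
  rw [qnum, div_div_eq_mul_div, div_eq_mul_inv, mul_comm w]
  exact (hasSum_qcpow_mul_natCast hq0 hq1 hw).mul_left _

theorem summable_norm_qcpow_mul_natCast_add (hq0 : 0 < q) (hq1 : q < 1) {w : ℂ}
    (hw : 0 < w.re) (z : ℂ) : Summable fun m : ℕ => ‖qcpow q (w * m + z)‖ := by
  simpa only [qcpow_add, mul_comm w, qcpow_natCast_mul, norm_mul, norm_pow] using
    (summable_geometric_of_lt_one (norm_nonneg _) (norm_qcpow_lt_one hq0 hq1 hw)).mul_right
      ‖qcpow q z‖

theorem norm_qnumR_add_natCast_le (hq0 : 0 < q) (hq1 : q < 1) (x : ℝ) (m : ℕ) :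
    ‖(qnumR q (x + m) : ℂ)‖ ≤ (1 + Real.exp (x * Real.log q)) / (1 - q) := by
  have hle : Real.exp ((x + m) * Real.log q) ≤ Real.exp (x * Real.log q) :=
    Real.exp_le_exp.2 (by nlinarith [Real.log_neg hq0 hq1, (Nat.cast_nonneg m : (0 : ℝ) ≤ m)])
  rw [Complex.norm_real, Real.norm_eq_abs, qnumR, abs_div, abs_of_pos (sub_pos.2 hq1)]
  gcongr
  rw [abs_le]
  constructor <;> linarith [Real.exp_pos ((x + m) * Real.log q), Real.exp_pos (x * Real.log q)]

end qcpow

section qbeta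

variable {q : ℝ} {h : ℂ}

theorem qbeta_summand_eq (hq1 : q ≠ 1) (n : ℕ) (x : ℝ) (m : ℕ) :
    (1 - (q : ℂ))⁻¹ ^ n * ∑ l ∈ range (n + 1), (n.choose l : ℂ) * (-1) ^ l *
        qcpow q (l * x) * ((1 - q) * (l + h - 1) * qcpow q ((l + h - 1) * m))
      = (h - 1) * (1 - q) * (qcpow q ((h - 1) * m) * (qnumR q (x + m) : ℂ) ^ n)
        - n * (qcpow q (h * m + x) * (qnumR q (x + m) : ℂ) ^ (n - 1)) := by
  have hq : (1 : ℂ) - q ≠ 0 := sub_ne_zero.2 (by exact_mod_cast hq1.symm)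
  set y := qcpow q (x + m)
  have hy : 1 - y = (1 - q) * qnumR q (x + m) := by
    rw [← one_sub_qcpow_ofReal hq1]
    push_cast
    rfl
  have hweight (l : ℕ) : qcpow q (l * x) * qcpow q ((l + h - 1) * m)
      = qcpow q ((h - 1) * m) * y ^ l := by
    rw [← qcpow_natCast_mul, ← qcpow_add, ← qcpow_add]
    ring_nf
  have hshift : qcpow q ((h - 1) * m) * y = qcpow q (h * m + x) := by
    rw [← qcpow_add]
    ring_nf
  have hsum : ∑ l ∈ range (n + 1), (n.choose l : ℂ) * (-1) ^ l *
        qcpow q (l * x) * ((1 - q) * (l + h - 1) * qcpow q ((l + h - 1) * m))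
      = (1 - q) * qcpow q ((h - 1) * m) *
        ∑ l ∈ range (n + 1), (n.choose l : ℂ) * (-1) ^ l * ((h - 1) + l) * y ^ l := by
    rw [mul_sum]
    refine sum_congr rfl fun l _ => ?_
    linear_combination (n.choose l : ℂ) * (-1) ^ l * (1 - q) * (l + h - 1) * hweight l
  rw [hsum, sum_range_choose_mul_neg_one_pow_mul_add_natCast_mul_pow, hy, ← hshift]
  cases n with
  | zero =>
    simp only [pow_zero, mul_one, Nat.cast_zero, zero_mul, sub_zero]
    ring
  | succ n =>
    simp only [Nat.add_sub_cancel, mul_pow, inv_pow]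
    field_simp
    ring

theorem qbeta_eq_tsum (hq0 : 0 < q) (hq1 : q < 1) (hh : 1 < h.re) (n : ℕ) (x : ℝ) :
    qbeta q h n x
      = (h - 1) * (1 - q) * ∑' m : ℕ, qcpow q ((h - 1) * m) * (qnumR q (x + m) : ℂ) ^ n
        - n * ∑' m : ℕ, qcpow q (h * m + x) * (qnumR q (x + m) : ℂ) ^ (n - 1) := by
  have hterm : ∀ l ∈ range (n + 1), HasSum
      (fun m : ℕ => (n.choose l : ℂ) * (-1) ^ l * qcpow q (l * x) *
        ((1 - q) * (l + h - 1) * qcpow q ((l + h - 1) * m)))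
      ((n.choose l : ℂ) * (-1) ^ l * qcpow q (l * x) * ((l + h - 1) / qnum q (l + h - 1))) :=
    fun l _ => (hasSum_mul_qcpow_mul_natCast_div_qnum hq0 hq1
      (by simp; linarith [(Nat.cast_nonneg l : (0 : ℝ) ≤ l)])).mul_left _
  have hqbeta := ((hasSum_sum hterm).mul_left ((1 - (q : ℂ))⁻¹ ^ n)).tsum_eq
  simp only [qbeta_summand_eq hq1.ne] at hqbeta
  have hc := norm_qnumR_add_natCast_le hq0 hq1 x
  have hsummable (w z : ℂ) (hw : 0 < w.re) (k : ℕ) :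
      Summable fun m : ℕ => qcpow q (w * m + z) * (qnumR q (x + m) : ℂ) ^ k :=
    (summable_norm_mul_of_norm_le (summable_norm_qcpow_mul_natCast_add hq0 hq1 hw z)
      fun m => (norm_pow _ k).trans_le (pow_le_pow_left₀ (norm_nonneg _) (hc m) k)).of_norm
  rw [qbeta, ← hqbeta, Summable.tsum_sub, tsum_mul_left, tsum_mul_left]
  · simpa using (hsummable (h - 1) 0 (by simp; linarith) n).mul_left ((h - 1) * (1 - q))
  · exact (hsummable h x (by linarith) (n - 1)).mul_left (n : ℂ)

end qbeta

theorem tsum_eq_sum_range_tsum_add_mul {R : Type*} [AddCommGroup R] [UniformSpace R]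
    [IsUniformAddGroup R] [CompleteSpace R] [T0Space R] {g : ℕ → R} (hg : Summable g) {N : ℕ}
    (hN : 0 < N) : ∑' n, g n = ∑ a ∈ range N, ∑' k, g (a + N * k) := by
  obtain ⟨N, rfl⟩ : ∃ M, N = M + 1 := ⟨N - 1, by omega⟩
  rw [Nat.sumByResidueClasses hg (N + 1)]
  exact Fin.sum_univ_eq_sum_range (fun a => ∑' k, g (a + (N + 1) * k)) (N + 1)

section residue

variable {q : ℝ} {f : ℕ}

theorem qcpow_mul_natCast_add_mul (w : ℂ) (a k : ℕ) :
    qcpow q (w * (a + f * k : ℕ)) = qcpow q (w * a) * qcpow (q ^ f) (w * k) := by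
  rw [qcpow_pow, ← qcpow_add]
  push_cast
  ring_nf

theorem qcpow_mul_natCast_add_mul_add_ofReal (hf : f ≠ 0) (h : ℂ) (x : ℝ) (a k : ℕ) :
    qcpow q (h * (a + f * k : ℕ) + x)
      = qcpow q ((h - 1) * a) * qcpow (q ^ f) (h * k + ((x + a) / f : ℝ)) := by
  have hfC : (f : ℂ) ≠ 0 := Nat.cast_ne_zero.2 hf
  rw [qcpow_pow, ← qcpow_add]
  congr 1
  push_cast
  field_simp
  ring

theorem qnumR_add_natCast_add_mul (hq0 : 0 < q) (hq1 : q < 1) (hf : f ≠ 0) (x : ℝ) (a k : ℕ) :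
    qnumR q (x + (a + f * k : ℕ)) = qnumR q f * qnumR (q ^ f) ((x + a) / f + k) := by
  have hfR : (f : ℝ) ≠ 0 := Nat.cast_ne_zero.2 hf
  rw [← qnumR_natCast_mul hq0 hq1]
  congr 1
  push_cast
  field_simp
  ring

theorem qbetaChi_summand_eq_tsum_add_mul (hq0 : 0 < q) (hq1 : q < 1) {h : ℂ} (hh : 1 < h.re)
    (hf : f ≠ 0) (χ : DirichletCharacter ℂ f) (n : ℕ) (x : ℝ) (a : ℕ) :
    qnum q f ^ ((n : ℤ) - 1) * (χ a * qcpow q ((h - 1) * a) * qbeta (q ^ f) h n ((x + a) / f))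
      = (h - 1) * (1 - q) * ∑' k : ℕ, qcpow q ((h - 1) * (a + f * k : ℕ)) * χ (a + f * k : ℕ)
            * (qnumR q (x + (a + f * k : ℕ)) : ℂ) ^ n
        - n * ∑' k : ℕ, qcpow q (h * (a + f * k : ℕ) + x) * χ (a + f * k : ℕ)
            * (qnumR q (x + (a + f * k : ℕ)) : ℂ) ^ (n - 1) := by
  set y : ℝ := (x + a) / f
  have hΦR : qnum q f = (qnumR q f : ℂ) := by exact_mod_cast qnum_ofReal (q := q) f
  set Φ := qnum q f
  have hqf : (1 : ℂ) - (q ^ f : ℝ) = (1 - q) * Φ := by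
    rw [hΦR]
    exact_mod_cast one_sub_pow_eq_mul_qnumR hq0 hq1.ne f
  have hΦ : Φ ≠ 0 := right_ne_zero_of_mul <| hqf ▸
    sub_ne_zero.2 (by exact_mod_cast (pow_lt_one₀ hq0.le hq1 hf).ne')
  have hχ (k : ℕ) : χ ((a + f * k : ℕ) : ZMod f) = χ a := by simp
  have hc (k : ℕ) : (qnumR q (x + (a + f * k : ℕ)) : ℂ) = Φ * qnumR (q ^ f) (y + k) := by
    rw [qnumR_add_natCast_add_mul hq0 hq1 hf, hΦR]
    push_cast
    rfl
  have hterm₁ (k : ℕ) : qcpow q ((h - 1) * (a + f * k : ℕ)) * χ (a + f * k : ℕ)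
      * (qnumR q (x + (a + f * k : ℕ)) : ℂ) ^ n = (χ a * qcpow q ((h - 1) * a) * Φ ^ n) *
        (qcpow (q ^ f) ((h - 1) * k) * (qnumR (q ^ f) (y + k) : ℂ) ^ n) := by
    rw [hχ, hc, qcpow_mul_natCast_add_mul]
    ring
  have hterm₂ (k : ℕ) : qcpow q (h * (a + f * k : ℕ) + x) * χ (a + f * k : ℕ)
      * (qnumR q (x + (a + f * k : ℕ)) : ℂ) ^ (n - 1)
      = (χ a * qcpow q ((h - 1) * a) * Φ ^ (n - 1)) *
        (qcpow (q ^ f) (h * k + y) * (qnumR (q ^ f) (y + k) : ℂ) ^ (n - 1)) := by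
    rw [hχ, hc, qcpow_mul_natCast_add_mul_add_ofReal hf]
    ring
  rw [tsum_congr hterm₁, tsum_congr hterm₂, tsum_mul_left, tsum_mul_left,
    qbeta_eq_tsum (pow_pos hq0 f) (pow_lt_one₀ hq0.le hq1 hf) hh, hqf]
  cases n with
  | zero =>
    simp only [Nat.cast_zero, zero_mul, sub_zero, pow_zero, mul_one, zero_sub, zpow_neg_one]
    field_simp
  | succ n =>
    rw [Nat.cast_succ, add_sub_cancel_right, zpow_natCast, Nat.add_sub_cancel]
    ring

end residue

theorem summable_norm_qcpow_mul_natCast_add_mul_dirichletCharacter {q : ℝ} (hq0 : 0 < q)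
    (hq1 : q < 1) {w : ℂ} (hw : 0 < w.re) (z : ℂ) {f : ℕ} (χ : DirichletCharacter ℂ f) :
    Summable fun m : ℕ => ‖qcpow q (w * m + z) * χ m‖ :=
  summable_norm_mul_of_norm_le (summable_norm_qcpow_mul_natCast_add hq0 hq1 hw z)
    fun m => χ.norm_le_one m

theorem qbetaChi_eq_tsum {q : ℝ} (hq0 : 0 < q) (hq1 : q < 1) {h : ℂ} (hh : 1 < h.re) {f : ℕ}
    (hf : 0 < f) (χ : DirichletCharacter ℂ f) (n : ℕ) (x : ℝ) :
    qbetaChi q h f χ n x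
      = (h - 1) * (1 - q) * ∑' m : ℕ, qcpow q ((h - 1) * m) * χ m * (qnumR q (x + m) : ℂ) ^ n
        - n * ∑' m : ℕ, qcpow q (h * m + x) * χ m * (qnumR q (x + m) : ℂ) ^ (n - 1) := by
  have hc := norm_qnumR_add_natCast_le hq0 hq1 x
  have hsummable (w z : ℂ) (hw : 0 < w.re) (k : ℕ) :
      Summable fun m : ℕ => qcpow q (w * m + z) * χ m * (qnumR q (x + m) : ℂ) ^ k :=
    (summable_norm_mul_of_norm_le
      (summable_norm_qcpow_mul_natCast_add_mul_dirichletCharacter hq0 hq1 hw z χ)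
      fun m => (norm_pow _ k).trans_le (pow_le_pow_left₀ (norm_nonneg _) (hc m) k)).of_norm
  rw [tsum_eq_sum_range_tsum_add_mul (by simpa using hsummable (h - 1) 0 (by simp; linarith) n) hf,
    tsum_eq_sum_range_tsum_add_mul (hsummable h x (by linarith) (n - 1)) hf, mul_sum, mul_sum,
    ← sum_sub_distrib, qbetaChi, mul_sum]
  exact sum_congr rfl fun a _ => qbetaChi_summand_eq_tsum_add_mul hq0 hq1 hh hf.ne' χ n x a

theorem qbetaChi_generating_function_general (q : ℝ) (hq0 : 0 < q) (hq1 : q < 1)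
    (h : ℂ) (hh : 1 < h.re) (f : ℕ) (hf : 1 ≤ f) (χ : DirichletCharacter ℂ f)
    (x : ℝ) (t : ℂ) :
    Summable (fun n : ℕ => qbetaChi q h f χ n x * t ^ n / (n.factorial : ℂ)) ∧
    Summable (fun m : ℕ => qcpow q ((h - 1) * (m : ℂ)) * χ (m : ZMod f) *
      Complex.exp ((qnumR q (x + m) : ℂ) * t)) ∧
    Summable (fun m : ℕ => qcpow q (h * (m : ℂ) + (x : ℂ)) * χ (m : ZMod f) *
      Complex.exp ((qnumR q (x + m) : ℂ) * t)) ∧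
    ∑' n : ℕ, qbetaChi q h f χ n x * t ^ n / (n.factorial : ℂ) =
      (h - 1) * (1 - (q : ℂ)) *
        (∑' m : ℕ, qcpow q ((h - 1) * (m : ℂ)) * χ (m : ZMod f) *
          Complex.exp ((qnumR q (x + m) : ℂ) * t)) -
      t * ∑' m : ℕ, qcpow q (h * (m : ℂ) + (x : ℂ)) * χ (m : ZMod f) *
          Complex.exp ((qnumR q (x + m) : ℂ) * t) := by
  have hc := norm_qnumR_add_natCast_le hq0 hq1 x
  have hexp (m : ℕ) : ‖Complex.exp ((qnumR q (x + m) : ℂ) * t)‖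
      ≤ Real.exp ((1 + Real.exp (x * Real.log q)) / (1 - q) * ‖t‖) :=
    (Complex.norm_exp_le_exp_norm _).trans <| Real.exp_le_exp.2 <|
      (norm_mul _ _).trans_le (mul_le_mul_of_nonneg_right (hc m) (norm_nonneg t))
  have hw₁ : Summable fun m : ℕ => ‖qcpow q ((h - 1) * m) * χ m‖ := by
    simpa using summable_norm_qcpow_mul_natCast_add_mul_dirichletCharacter hq0 hq1
      (w := h - 1) (by simp; linarith) 0 χ
  have hw₂ := summable_norm_qcpow_mul_natCast_add_mul_dirichletCharacter hq0 hq1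
    (w := h) (by linarith) x χ
  have hsum := ((hasSum_tsum_mul_pow_mul_pow_div_factorial hw₁ hc t).mul_left
    ((h - 1) * (1 - q))).sub
    (hasSum_tsum_mul_pow_mul_pow_div_factorial hw₂ hc t).natCast_mul_sub_one_mul_pow_div_factorial
  have hterm (n : ℕ) : qbetaChi q h f χ n x * t ^ n / n.factorial
      = (h - 1) * (1 - q) * ((∑' m : ℕ, qcpow q ((h - 1) * m) * χ m * (qnumR q (x + m) : ℂ) ^ n)
          * t ^ n / n.factorial)
        - n * (∑' m : ℕ, qcpow q (h * m + x) * χ m * (qnumR q (x + m) : ℂ) ^ (n - 1))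
          * t ^ n / n.factorial := by
    rw [qbetaChi_eq_tsum hq0 hq1 hh hf]
    ring
  simp only [← hterm] at hsum
  exact ⟨hsum.summable, (summable_norm_mul_of_norm_le hw₁ hexp).of_norm,
    (summable_norm_mul_of_norm_le hw₂ hexp).of_norm, hsum.tsum_eq⟩

/-- generating function of the generalized `(h,q)`-Bernoulli polynomials
attached to `χ`. -/
theorem qbetaChi_generating_function (q : ℝ) (hq0 : 0 < q) (hq1 : q < 1)
    (h : ℂ) (hh : 1 < h.re) (f : ℕ) (hf : 1 ≤ f) (χ : DirichletCharacter ℂ f)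
    (x : ℝ) (hx : 0 < x) (t : ℂ) :
    Summable (fun n : ℕ => qbetaChi q h f χ n x * t ^ n / (n.factorial : ℂ)) ∧
    Summable (fun m : ℕ => qcpow q ((h - 1) * (m : ℂ)) * χ (m : ZMod f) *
      Complex.exp ((qnumR q (x + m) : ℂ) * t)) ∧
    Summable (fun m : ℕ => qcpow q (h * (m : ℂ) + (x : ℂ)) * χ (m : ZMod f) *
      Complex.exp ((qnumR q (x + m) : ℂ) * t)) ∧
    ∑' n : ℕ, qbetaChi q h f χ n x * t ^ n / (n.factorial : ℂ) =
      (h - 1) * (1 - (q : ℂ)) *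
        (∑' m : ℕ, qcpow q ((h - 1) * (m : ℂ)) * χ (m : ZMod f) *
          Complex.exp ((qnumR q (x + m) : ℂ) * t)) -
      t * ∑' m : ℕ, qcpow q (h * (m : ℂ) + (x : ℂ)) * χ (m : ZMod f) *
          Complex.exp ((qnumR q (x + m) : ℂ) * t) :=
  qbetaChi_generating_function_general q hq0 hq1 h hh f hf χ x t
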